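/- A divisor γ ∈ 𝒟 lies in (𝒫₁ + 𝒫₂) ∩ 𝒫₃ if and only if γ is constant on each D_n-orbit of V and, for each 1 ≤ j ≤ s, the integer n·γ(z_i^j) is even (equivalently: if n is odd, the common value of γ on each z-orbit is even; if n is even, no parity condition is imposed). -/

import Mathlib

open scoped BigOperators

section Setup

variable (n s t : ℕ) [NeZero n]

/-- The vertex set: `Sum.inl (j,i)` is `z_i^j`, `Sum.inr (Sum.inl (j,i))` is `x_i^j`,
`Sum.inr (Sum.inr (j,i))` is `y_i^j`. -/
abbrev Vrt := (Fin s × ZMod n) ⊕ ((Fin t × ZMod n) ⊕ (Fin t × ZMod n))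

def zv (j : Fin s) (i : ZMod n) : Vrt n s t := Sum.inl (j, i)
def xv (j : Fin t) (i : ZMod n) : Vrt n s t := Sum.inr (Sum.inl (j, i))
def yv (j : Fin t) (i : ZMod n) : Vrt n s t := Sum.inr (Sum.inr (j, i))

/-- The involution σ₁. -/
def sig1 : Vrt n s t → Vrt n s t
  | Sum.inl (j, i) => Sum.inl (j, 1 - i)
  | Sum.inr (Sum.inl (j, i)) => Sum.inr (Sum.inr (j, 1 - i))
  | Sum.inr (Sum.inr (j, i)) => Sum.inr (Sum.inl (j, 1 - i))

/-- The involution σ₂. -/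
def sig2 : Vrt n s t → Vrt n s t
  | Sum.inl (j, i) => Sum.inl (j, 2 - i)
  | Sum.inr (Sum.inl (j, i)) => Sum.inr (Sum.inr (j, 2 - i))
  | Sum.inr (Sum.inr (j, i)) => Sum.inr (Sum.inl (j, 2 - i))

/-- The rotation ρ = σ₂ ∘ σ₁. -/
def rho : Vrt n s t → Vrt n s t := sig2 n s t ∘ sig1 n s t

/-- The index of a vertex, an element of ℤ/nℤ. -/
def idx : Vrt n s t → ZMod n
  | Sum.inl (_, i) => i
  | Sum.inr (Sum.inl (_, i)) => i
  | Sum.inr (Sum.inr (_, i)) => i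

/-- The group 𝒟 of divisors of total degree zero. -/
def DivD : AddSubgroup (Vrt n s t → ℤ) where
  carrier := {δ | ∑ v, δ v = 0}
  zero_mem' := by simp
  add_mem' := by
    intro a b ha hb
    simp only [Set.mem_setOf_eq, Pi.add_apply, Finset.sum_add_distrib] at *
    simp [ha, hb]
  neg_mem' := by
    intro a ha
    simp only [Set.mem_setOf_eq, Pi.neg_apply, Finset.sum_neg_distrib] at *
    simp [ha]

/-- 𝒫₁ : degree-zero divisors invariant under σ₁ with even values at σ₁-fixed vertices. -/
def Pgp1 : AddSubgroup (Vrt n s t → ℤ) where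
  carrier := {δ | (∑ v, δ v = 0) ∧ (∀ v, δ (sig1 n s t v) = δ v) ∧
      ∀ v, sig1 n s t v = v → Even (δ v)}
  zero_mem' := ⟨by simp, fun _ => rfl, fun _ _ => Even.zero⟩
  add_mem' := by
    rintro a b ⟨ha0, ha1, ha2⟩ ⟨hb0, hb1, hb2⟩
    refine ⟨?_, fun v => by simp [ha1 v, hb1 v], fun v hv => (ha2 v hv).add (hb2 v hv)⟩
    simp [Finset.sum_add_distrib, ha0, hb0]
  neg_mem' := by
    rintro a ⟨ha0, ha1, ha2⟩
    exact ⟨by simp [Finset.sum_neg_distrib, ha0], fun v => by simp [ha1 v],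
      fun v hv => (ha2 v hv).neg⟩

/-- 𝒫₂ : degree-zero divisors invariant under σ₂ with even values at σ₂-fixed vertices. -/
def Pgp2 : AddSubgroup (Vrt n s t → ℤ) where
  carrier := {δ | (∑ v, δ v = 0) ∧ (∀ v, δ (sig2 n s t v) = δ v) ∧
      ∀ v, sig2 n s t v = v → Even (δ v)}
  zero_mem' := ⟨by simp, fun _ => rfl, fun _ _ => Even.zero⟩
  add_mem' := by
    rintro a b ⟨ha0, ha1, ha2⟩ ⟨hb0, hb1, hb2⟩
    refine ⟨?_, fun v => by simp [ha1 v, hb1 v], fun v hv => (ha2 v hv).add (hb2 v hv)⟩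
    simp [Finset.sum_add_distrib, ha0, hb0]
  neg_mem' := by
    rintro a ⟨ha0, ha1, ha2⟩
    exact ⟨by simp [Finset.sum_neg_distrib, ha0], fun v => by simp [ha1 v],
      fun v hv => (ha2 v hv).neg⟩

/-- 𝒫₃ : degree-zero divisors invariant under ρ. -/
def Pgp3 : AddSubgroup (Vrt n s t → ℤ) where
  carrier := {δ | (∑ v, δ v = 0) ∧ ∀ v, δ (rho n s t v) = δ v}
  zero_mem' := ⟨by simp, fun _ => rfl⟩
  add_mem' := by
    rintro a b ⟨ha0, ha1⟩ ⟨hb0, hb1⟩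
    exact ⟨by simp [Finset.sum_add_distrib, ha0, hb0], fun v => by simp [ha1 v, hb1 v]⟩
  neg_mem' := by
    rintro a ⟨ha0, ha1⟩
    exact ⟨by simp [Finset.sum_neg_distrib, ha0], fun v => by simp [ha1 v]⟩

/-- 𝒫₀ : degree-zero divisors constant on each D_n-orbit with even values at the z-vertices
(the pullbacks of degree-zero divisors on G/D_n). -/
def Pgp0 : AddSubgroup (Vrt n s t → ℤ) where
  carrier := {δ | (∑ v, δ v = 0) ∧
      (∀ j i₁ i₂, δ (zv n s t j i₁) = δ (zv n s t j i₂)) ∧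
      (∀ j i₁ i₂, δ (xv n s t j i₁) = δ (xv n s t j i₂)) ∧
      (∀ j i₁ i₂, δ (xv n s t j i₁) = δ (yv n s t j i₂)) ∧
      ∀ j i, Even (δ (zv n s t j i))}
  zero_mem' := ⟨by simp, fun _ _ _ => rfl, fun _ _ _ => rfl, fun _ _ _ => rfl,
    fun _ _ => Even.zero⟩
  add_mem' := by
    rintro a b ⟨ha0, ha1, ha2, ha3, ha4⟩ ⟨hb0, hb1, hb2, hb3, hb4⟩
    exact ⟨by simp [Finset.sum_add_distrib, ha0, hb0],
      fun j i₁ i₂ => by simp [ha1 j i₁ i₂, hb1 j i₁ i₂],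
      fun j i₁ i₂ => by simp [ha2 j i₁ i₂, hb2 j i₁ i₂],
      fun j i₁ i₂ => by simp [ha3 j i₁ i₂, hb3 j i₁ i₂],
      fun j i => (ha4 j i).add (hb4 j i)⟩
  neg_mem' := by
    rintro a ⟨ha0, ha1, ha2, ha3, ha4⟩
    exact ⟨by simp [Finset.sum_neg_distrib, ha0],
      fun j i₁ i₂ => by simp [ha1 j i₁ i₂],
      fun j i₁ i₂ => by simp [ha2 j i₁ i₂],
      fun j i₁ i₂ => by simp [ha3 j i₁ i₂],
      fun j i => (ha4 j i).neg⟩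

/-- σ₁ as a permutation of the vertex set. -/
def sig1e : Equiv.Perm (Vrt n s t) where
  toFun := sig1 n s t
  invFun := sig1 n s t
  left_inv := by rintro (⟨j, i⟩ | ⟨j, i⟩ | ⟨j, i⟩) <;> simp [sig1, sub_sub_cancel]
  right_inv := by rintro (⟨j, i⟩ | ⟨j, i⟩ | ⟨j, i⟩) <;> simp [sig1, sub_sub_cancel]

/-- σ₂ as a permutation of the vertex set. -/
def sig2e : Equiv.Perm (Vrt n s t) where
  toFun := sig2 n s t
  invFun := sig2 n s t
  left_inv := by rintro (⟨j, i⟩ | ⟨j, i⟩ | ⟨j, i⟩) <;> simp [sig2, sub_sub_cancel]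
  right_inv := by rintro (⟨j, i⟩ | ⟨j, i⟩ | ⟨j, i⟩) <;> simp [sig2, sub_sub_cancel]

/-- The dihedral group D_n, realized as the subgroup of permutations of the vertex set
generated by σ₁ and σ₂. -/
def dihedral : Subgroup (Equiv.Perm (Vrt n s t)) :=
  Subgroup.closure {sig1e n s t, sig2e n s t}

/-- The multigraph with `w u v` edges between `u` and `v`, seen as a simple graph
recording adjacency. -/
def wGraph (w : Vrt n s t → Vrt n s t → ℕ) : SimpleGraph (Vrt n s t) where
  Adj u v := u ≠ v ∧ (w u v ≠ 0 ∨ w v u ≠ 0)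
  symm := ⟨by rintro u v ⟨h1, h2⟩; exact ⟨h1.symm, h2.symm⟩⟩
  loopless := ⟨by rintro v ⟨h, _⟩; exact h rfl⟩

/-- The firing divisor `L_v`. -/
def fire (w : Vrt n s t → Vrt n s t → ℕ) (v u : Vrt n s t) : ℤ :=
  if u = v then -(∑ x, (w v x : ℤ)) else (w u v : ℤ)

/-- The lattice ℒ generated by the firing divisors. -/
def FireLat (w : Vrt n s t → Vrt n s t → ℕ) : AddSubgroup (Vrt n s t → ℤ) :=
  AddSubgroup.closure (Set.range (fire n s t w))

/-- Harmonicity: no nontrivial element of D_n fixes both endpoints of an edge. -/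
def Harmonic (w : Vrt n s t → Vrt n s t → ℕ) : Prop :=
  ∀ g ∈ dihedral n s t, g ≠ 1 →
    ∀ u v : Vrt n s t, (wGraph n s t w).Adj u v → ¬(g u = u ∧ g v = v)

/-- The critical group K(G) = 𝒟/ℒ. -/
abbrev KGrp (w : Vrt n s t → Vrt n s t → ℕ) :=
  DivD n s t ⧸ ((FireLat n s t w).addSubgroupOf (DivD n s t))

/-- The image (𝒫 + ℒ)/ℒ of a subgroup 𝒫 of divisors in the critical group. -/
def Jsub (w : Vrt n s t → Vrt n s t → ℕ) (P : AddSubgroup (Vrt n s t → ℤ)) :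
    AddSubgroup (KGrp n s t w) :=
  ((P ⊔ FireLat n s t w).addSubgroupOf (DivD n s t)).map
    (QuotientAddGroup.mk' ((FireLat n s t w).addSubgroupOf (DivD n s t)))

/-- The sum map Φ : J₁ × J₂ × J₃ → K(G). -/
def Phi (w : Vrt n s t → Vrt n s t → ℕ) :
    (Jsub n s t w (Pgp1 n s t) × Jsub n s t w (Pgp2 n s t) × Jsub n s t w (Pgp3 n s t)) →+
      KGrp n s t w where
  toFun p := (p.1 : KGrp n s t w) + (p.2.1 : KGrp n s t w) + (p.2.2 : KGrp n s t w)
  map_zero' := by simp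
  map_add' := by
    intro a b
    simp only [Prod.fst_add, Prod.snd_add, AddSubgroup.coe_add]
    abel

/-- The subgroup ℒ′ of ℒ. -/
def FireLat' (w : Vrt n s t → Vrt n s t → ℕ) : AddSubgroup (Vrt n s t → ℤ) :=
  AddSubgroup.closure
    ({d | ∃ j i, d = fire n s t w (zv n s t j i)} ∪
     {d | ∃ j i₁ i₂, d = fire n s t w (xv n s t j i₁) + fire n s t w (yv n s t j i₂)} ∪
     {d | ∃ j, d = ∑ i, fire n s t w (xv n s t j i)} ∪
     {d | ∃ j, d = ∑ i, fire n s t w (yv n s t j i)})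

end Setup

/-!
Writing `γ = α + β` with `α` σ₁-symmetric and `β` σ₂-symmetric, each reflection `i ↦ c - i`
exchanges the `x`- and `y`-orbits and pairs off the non-fixed `z`-vertices, so for `α` and `β`,
hence for `γ`, the `x`- and `y`-orbit sums agree and every `z`-orbit sum is even. Since a
ρ-invariant `γ` is constant on each ρ-orbit, these orbit sums are `n` times its values.
Conversely, an orbit-constant `γ` lies in 𝒫₁ when `n` is even (σ₁ then fixes no vertex) and in
𝒫₂ when `n` is odd (the σ₂-fixed `z`-vertices then carry even values).
-/

theorem Function.Involutive.even_sum_of_even_fixed {α : Type*} [Fintype α] {σ : α → α}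
    (hσ : Function.Involutive σ) {f : α → ℤ} (hf : ∀ a, f (σ a) = f a)
    (hfix : ∀ a, σ a = a → Even (f a)) : Even (∑ a, f a) := by
  rw [← ZMod.intCast_eq_zero_iff_even, Int.cast_sum]
  refine Finset.sum_ninvolution σ (fun a => ?_) (fun a hfa hσa => hfa ?_)
    (fun _ => Finset.mem_univ _) hσ
  · rw [hf, CharTwo.add_self_eq_zero]
  · exact (ZMod.intCast_eq_zero_iff_even).mpr (hfix a hσa)

theorem ZMod.eq_of_apply_add_one_eq {n : ℕ} [NeZero n] {α : Type*} {f : ZMod n → α}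
    (h : ∀ i, f (i + 1) = f i) (i₁ i₂ : ZMod n) : f i₁ = f i₂ := by
  have hnat : ∀ k : ℕ, f k = f 0 := by
    intro k
    induction k with
    | zero => simp
    | succ k ih => rw [Nat.cast_succ, h, ih]
  rw [← ZMod.natCast_zmod_val i₁, ← ZMod.natCast_zmod_val i₂, hnat, hnat]

theorem ZMod.sum_eq_mul_of_const {n : ℕ} [NeZero n] {f : ZMod n → ℤ}
    (h : ∀ i₁ i₂, f i₁ = f i₂) (i : ZMod n) : ∑ i', f i' = n * f i := by
  simp [Finset.sum_congr rfl fun i' _ => h i' i, ZMod.card]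

theorem ZMod.one_sub_ne_self {n : ℕ} (hn : Even n) (i : ZMod n) : 1 - i ≠ i := by
  intro h
  have h2 := congrArg (ZMod.castHom hn.two_dvd (ZMod 2)) h
  rw [map_sub, map_one] at h2
  revert h2
  generalize ZMod.castHom hn.two_dvd (ZMod 2) i = a
  decide +revert

section Reflection

variable {n s t : ℕ}

variable (n s t) in
def reflect (c : ZMod n) : Vrt n s t → Vrt n s t
  | Sum.inl (j, i) => Sum.inl (j, c - i)
  | Sum.inr (Sum.inl (j, i)) => Sum.inr (Sum.inr (j, c - i))
  | Sum.inr (Sum.inr (j, i)) => Sum.inr (Sum.inl (j, c - i))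

theorem sig1_eq_reflect : sig1 n s t = reflect n s t 1 := by
  funext v; rcases v with ⟨j, i⟩ | ⟨j, i⟩ | ⟨j, i⟩ <;> rfl

theorem sig2_eq_reflect : sig2 n s t = reflect n s t 2 := by
  funext v; rcases v with ⟨j, i⟩ | ⟨j, i⟩ | ⟨j, i⟩ <;> rfl

theorem rho_zv (j : Fin s) (i : ZMod n) : rho n s t (zv n s t j i) = zv n s t j (i + 1) :=
  congrArg (zv n s t j) (show (2 : ZMod n) - (1 - i) = i + 1 by ring)

theorem rho_xv (j : Fin t) (i : ZMod n) : rho n s t (xv n s t j i) = xv n s t j (i + 1) :=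
  congrArg (xv n s t j) (show (2 : ZMod n) - (1 - i) = i + 1 by ring)

theorem rho_yv (j : Fin t) (i : ZMod n) : rho n s t (yv n s t j i) = yv n s t j (i + 1) :=
  congrArg (yv n s t j) (show (2 : ZMod n) - (1 - i) = i + 1 by ring)

def IsReflectionSymmetric (c : ZMod n) (δ : Vrt n s t → ℤ) : Prop :=
  (∀ v, δ (reflect n s t c v) = δ v) ∧ ∀ v, reflect n s t c v = v → Even (δ v)

variable {δ : Vrt n s t → ℤ}

theorem isReflectionSymmetric_of_orbit_const (c : ZMod n)
    (hz : ∀ j i₁ i₂, δ (zv n s t j i₁) = δ (zv n s t j i₂))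
    (hxy : ∀ j i₁ i₂, δ (xv n s t j i₁) = δ (yv n s t j i₂))
    (hfix : ∀ j i, c - i = i → Even (δ (zv n s t j i))) : IsReflectionSymmetric c δ := by
  constructor
  · rintro (⟨j, i⟩ | ⟨j, i⟩ | ⟨j, i⟩)
    · exact hz j (c - i) i
    · exact (hxy j i (c - i)).symm
    · exact hxy j (c - i) i
  · rintro (⟨j, i⟩ | ⟨j, i⟩ | ⟨j, i⟩) hv
    · exact hfix j i (congrArg Prod.snd (Sum.inl_injective hv))
    · cases hv
    · cases hv

variable [NeZero n]

theorem mem_Pgp1_iff : δ ∈ Pgp1 n s t ↔ ∑ v, δ v = 0 ∧ IsReflectionSymmetric 1 δ := by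
  rw [IsReflectionSymmetric, ← sig1_eq_reflect]; rfl

theorem mem_Pgp2_iff : δ ∈ Pgp2 n s t ↔ ∑ v, δ v = 0 ∧ IsReflectionSymmetric 2 δ := by
  rw [IsReflectionSymmetric, ← sig2_eq_reflect]; rfl

namespace IsReflectionSymmetric

variable {c : ZMod n}

theorem sum_xv_eq_sum_yv (h : IsReflectionSymmetric c δ) (j : Fin t) :
    ∑ i, δ (xv n s t j i) = ∑ i, δ (yv n s t j i) :=
  calc ∑ i, δ (xv n s t j i) = ∑ i, δ (yv n s t j (c - i)) :=
        Finset.sum_congr rfl fun i _ => (h.1 (xv n s t j i)).symm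
    _ = ∑ i, δ (yv n s t j i) := Fintype.sum_equiv (Equiv.subLeft c) _ _ fun _ => rfl

theorem even_sum_zv (h : IsReflectionSymmetric c δ) (j : Fin s) :
    Even (∑ i, δ (zv n s t j i)) :=
  Function.Involutive.even_sum_of_even_fixed (σ := (c - ·)) (sub_sub_cancel c)
    (fun i => h.1 (zv n s t j i)) fun _ hi => h.2 _ (congrArg (zv n s t j) hi)

end IsReflectionSymmetric

theorem sum_xv_eq_sum_yv_of_mem_sup (h : δ ∈ Pgp1 n s t ⊔ Pgp2 n s t) (j : Fin t) :
    ∑ i, δ (xv n s t j i) = ∑ i, δ (yv n s t j i) := by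
  obtain ⟨a, ha, b, hb, rfl⟩ := AddSubgroup.mem_sup.mp h
  simp only [Pi.add_apply, Finset.sum_add_distrib]
  rw [(mem_Pgp1_iff.mp ha).2.sum_xv_eq_sum_yv, (mem_Pgp2_iff.mp hb).2.sum_xv_eq_sum_yv]

theorem even_sum_zv_of_mem_sup (h : δ ∈ Pgp1 n s t ⊔ Pgp2 n s t) (j : Fin s) :
    Even (∑ i, δ (zv n s t j i)) := by
  obtain ⟨a, ha, b, hb, rfl⟩ := AddSubgroup.mem_sup.mp h
  simp only [Pi.add_apply, Finset.sum_add_distrib]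
  exact (mem_Pgp1_iff.mp ha).2.even_sum_zv j |>.add ((mem_Pgp2_iff.mp hb).2.even_sum_zv j)

theorem orbit_const_of_rho_invariant (h : ∀ v, δ (rho n s t v) = δ v) :
    (∀ j i₁ i₂, δ (zv n s t j i₁) = δ (zv n s t j i₂)) ∧
      (∀ j i₁ i₂, δ (xv n s t j i₁) = δ (xv n s t j i₂)) ∧
      ∀ j i₁ i₂, δ (yv n s t j i₁) = δ (yv n s t j i₂) :=
  ⟨fun j => ZMod.eq_of_apply_add_one_eq fun i => by rw [← rho_zv]; exact h _,
    fun j => ZMod.eq_of_apply_add_one_eq fun i => by rw [← rho_xv]; exact h _,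
    fun j => ZMod.eq_of_apply_add_one_eq fun i => by rw [← rho_yv]; exact h _⟩

theorem mem_Pgp3_of_orbit_const (hsum : ∑ v, δ v = 0)
    (hz : ∀ j i₁ i₂, δ (zv n s t j i₁) = δ (zv n s t j i₂))
    (hx : ∀ j i₁ i₂, δ (xv n s t j i₁) = δ (xv n s t j i₂))
    (hxy : ∀ j i₁ i₂, δ (xv n s t j i₁) = δ (yv n s t j i₂)) : δ ∈ Pgp3 n s t := by
  refine ⟨hsum, ?_⟩
  rintro (⟨j, i⟩ | ⟨j, i⟩ | ⟨j, i⟩)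
  · exact hz j _ i
  · exact hx j _ i
  · exact (hxy j 0 _).symm.trans (hxy j 0 i)

end Reflection

theorem mem_P12_inf_P3_iff_general (n s t : ℕ) [NeZero n]
    (γ : Vrt n s t → ℤ) (hγ : γ ∈ DivD n s t) :
    γ ∈ (Pgp1 n s t ⊔ Pgp2 n s t) ⊓ Pgp3 n s t ↔
      ((∀ j i₁ i₂, γ (zv n s t j i₁) = γ (zv n s t j i₂)) ∧
       (∀ j i₁ i₂, γ (xv n s t j i₁) = γ (xv n s t j i₂)) ∧
       (∀ j i₁ i₂, γ (xv n s t j i₁) = γ (yv n s t j i₂)) ∧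
       ∀ j i, Even ((n : ℤ) * γ (zv n s t j i))) := by
  have hsum : ∑ v, γ v = 0 := hγ
  constructor
  · rintro ⟨h12, -, hρ⟩
    obtain ⟨hz, hx, hy⟩ := orbit_const_of_rho_invariant hρ
    have hxy (j : Fin t) : γ (xv n s t j 0) = γ (yv n s t j 0) := by
      refine mul_left_cancel₀ (Nat.cast_ne_zero.mpr (NeZero.ne n)) ?_
      rw [← ZMod.sum_eq_mul_of_const (hx j), ← ZMod.sum_eq_mul_of_const (hy j)]
      exact sum_xv_eq_sum_yv_of_mem_sup h12 j
    refine ⟨hz, hx, fun j i₁ i₂ => (hx j i₁ 0).trans ((hxy j).trans (hy j 0 i₂)), fun j i => ?_⟩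
    rw [← ZMod.sum_eq_mul_of_const (hz j)]
    exact even_sum_zv_of_mem_sup h12 j
  · rintro ⟨hz, hx, hxy, heven⟩
    refine ⟨?_, mem_Pgp3_of_orbit_const hsum hz hx hxy⟩
    rcases Nat.even_or_odd n with hn | hn
    · refine AddSubgroup.mem_sup_left (mem_Pgp1_iff.mpr ⟨hsum, ?_⟩)
      exact isReflectionSymmetric_of_orbit_const 1 hz hxy fun _ i hi =>
        absurd hi (ZMod.one_sub_ne_self hn i)
    · refine AddSubgroup.mem_sup_right (mem_Pgp2_iff.mpr ⟨hsum, ?_⟩)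
      have hn' : ¬Even (n : ℤ) := by rwa [Int.even_coe_nat, Nat.not_even_iff_odd]
      exact isReflectionSymmetric_of_orbit_const 2 hz hxy fun j i _ =>
        (Int.even_mul.mp (heven j i)).resolve_left hn'

/-- **(𝒫₁ + 𝒫₂) ∩ 𝒫₃.** -/
theorem mem_P12_inf_P3_iff (n s t : ℕ) [NeZero n] (hn : 3 ≤ n)
    (γ : Vrt n s t → ℤ) (hγ : γ ∈ DivD n s t) :
    γ ∈ (Pgp1 n s t ⊔ Pgp2 n s t) ⊓ Pgp3 n s t ↔
      ((∀ j i₁ i₂, γ (zv n s t j i₁) = γ (zv n s t j i₂)) ∧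
       (∀ j i₁ i₂, γ (xv n s t j i₁) = γ (xv n s t j i₂)) ∧
       (∀ j i₁ i₂, γ (xv n s t j i₁) = γ (yv n s t j i₂)) ∧
       ∀ j i, Even ((n : ℤ) * γ (zv n s t j i))) :=
  mem_P12_inf_P3_iff_general n s t γ hγ
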